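/- arXiv:2601.08280 — 2 statements merged into one kernel-verified Lean document; each statement's English description precedes it below -/
import Mathlib

section
/- (Bretagnolle–Huber inequality) For any two probability measures P and Q on the same measurable space and any event E, P(E) + Q(Eᶜ) ≥ (1/2) · exp(−KL(P‖Q)). -/
open MeasureTheory
open scoped ENNReal Classical

/-- Kullback–Leibler divergence `KL(P‖Q) = ∫ log(dP/dQ) dP`, with value `∞` when `P` is
not absolutely continuous with respect to `Q` (or the integral does not exist). -/
noncomputable def klDiv {Ω : Type*} [MeasurableSpace Ω] (P Q : Measure Ω) : ℝ≥0∞ :=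
  if P ≪ Q ∧ Integrable (fun x => Real.log (P.rnDeriv Q x).toReal) P then
    ENNReal.ofReal (∫ x, Real.log (P.rnDeriv Q x).toReal ∂P)
  else ⊤

/-!
Write `B = ∫ √(dP/dQ) dQ` for the Bhattacharyya coefficient. If `P ≪ Q`, then
`B = ∫ exp(-(log dP/dQ)/2) dP ≥ exp(-KL(P‖Q)/2)` by Jensen's inequality. Splitting `B` over
`E` and `Eᶜ` and applying Cauchy–Schwarz on each piece gives `B ≤ √(P E) + √(Q Eᶜ)`, and finally
`(a + b)² ≤ 2 (a² + b²)`.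
-/

theorem Real.mul_exp_neg_half_log {x : ℝ} (hx : 0 ≤ x) :
    x * Real.exp (-Real.log x / 2) = √x := by
  rcases hx.eq_or_lt with rfl | hx
  · simp
  · rw [neg_div, Real.exp_neg, Real.exp_half, Real.exp_log hx, ← div_eq_mul_inv, Real.div_sqrt]

namespace MeasureTheory

noncomputable def bhattacharyya {Ω : Type*} [MeasurableSpace Ω] (P Q : Measure Ω) : ℝ≥0∞ :=
  ∫⁻ x, P.rnDeriv Q x ^ (2⁻¹ : ℝ) ∂Q

variable {Ω : Type*} [MeasurableSpace Ω] {P Q : Measure Ω}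

variable (P Q) in
theorem setLIntegral_rnDeriv_rpow_half_le (A : Set Ω) :
    ∫⁻ x in A, P.rnDeriv Q x ^ (2⁻¹ : ℝ) ∂Q ≤ P A ^ (2⁻¹ : ℝ) * Q A ^ (2⁻¹ : ℝ) := by
  have hCS := ENNReal.lintegral_mul_le_Lp_mul_Lq (Q.restrict A) Real.HolderConjugate.two_two
    ((P.measurable_rnDeriv Q).pow_const (2⁻¹ : ℝ)).aemeasurable aemeasurable_const (g := 1)
  simp only [Pi.mul_apply, Pi.one_apply, mul_one, ENNReal.rpow_inv_rpow two_ne_zero,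
    ENNReal.one_rpow, lintegral_one, Measure.restrict_apply_univ, one_div] at hCS
  exact hCS.trans (by gcongr; exact Measure.setLIntegral_rnDeriv_le A)

theorem bhattacharyya_le [IsZeroOrProbabilityMeasure P] [IsZeroOrProbabilityMeasure Q]
    {E : Set Ω} (hE : MeasurableSet E) :
    bhattacharyya P Q ≤ P E ^ (2⁻¹ : ℝ) + Q Eᶜ ^ (2⁻¹ : ℝ) := by
  rw [bhattacharyya, ← lintegral_add_compl _ hE]
  have hle_one : ∀ {μ : Measure Ω} [IsZeroOrProbabilityMeasure μ] (s : Set Ω),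
      μ s ^ (2⁻¹ : ℝ) ≤ 1 := fun _ => ENNReal.rpow_le_one prob_le_one (by norm_num)
  calc _ ≤ P E ^ (2⁻¹ : ℝ) * Q E ^ (2⁻¹ : ℝ) + P Eᶜ ^ (2⁻¹ : ℝ) * Q Eᶜ ^ (2⁻¹ : ℝ) :=
        add_le_add (setLIntegral_rnDeriv_rpow_half_le P Q E)
          (setLIntegral_rnDeriv_rpow_half_le P Q Eᶜ)
    _ ≤ P E ^ (2⁻¹ : ℝ) * 1 + 1 * Q Eᶜ ^ (2⁻¹ : ℝ) := by
        gcongr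
        exacts [hle_one E, hle_one Eᶜ]
    _ = P E ^ (2⁻¹ : ℝ) + Q Eᶜ ^ (2⁻¹ : ℝ) := by rw [mul_one, one_mul]

theorem bhattacharyya_sq_le [IsZeroOrProbabilityMeasure P] [IsZeroOrProbabilityMeasure Q]
    {E : Set Ω} (hE : MeasurableSet E) :
    bhattacharyya P Q ^ 2 ≤ 2 * (P E + Q Eᶜ) := by
  have h := ENNReal.rpow_add_le_mul_rpow_add_rpow (P E ^ (2⁻¹ : ℝ)) (Q Eᶜ ^ (2⁻¹ : ℝ))
    one_le_two
  rw [ENNReal.rpow_inv_rpow two_ne_zero, ENNReal.rpow_inv_rpow two_ne_zero,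
    show (2 : ℝ) - 1 = 1 by norm_num, ENNReal.rpow_one] at h
  rw [← ENNReal.rpow_two]
  exact (ENNReal.rpow_le_rpow (bhattacharyya_le hE) zero_le_two).trans h

theorem rnDeriv_smul_exp_neg_half_llr :
    (fun x => (P.rnDeriv Q x).toReal • Real.exp (-llr P Q x / 2)) =
      fun x => √(P.rnDeriv Q x).toReal :=
  funext fun _ => Real.mul_exp_neg_half_log ENNReal.toReal_nonneg

variable [IsFiniteMeasure P] [IsFiniteMeasure Q]

theorem integrable_sqrt_toReal_rnDeriv : Integrable (fun x => √(P.rnDeriv Q x).toReal) Q := by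
  have hmeas : AEStronglyMeasurable (fun x => √(P.rnDeriv Q x).toReal) Q :=
    (P.measurable_rnDeriv Q).ennreal_toReal.sqrt.aestronglyMeasurable
  have hL2 : MemLp (fun x => √(P.rnDeriv Q x).toReal) 2 Q :=
    (memLp_two_iff_integrable_sq hmeas).2 <| by
      simpa only [Real.sq_sqrt ENNReal.toReal_nonneg] using Measure.integrable_toReal_rnDeriv
  exact hL2.integrable one_le_two

theorem ofReal_integral_sqrt_toReal_rnDeriv :
    ENNReal.ofReal (∫ x, √(P.rnDeriv Q x).toReal ∂Q) = bhattacharyya P Q := by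
  rw [ofReal_integral_eq_lintegral_ofReal integrable_sqrt_toReal_rnDeriv
    (Filter.Eventually.of_forall fun _ => Real.sqrt_nonneg _)]
  refine lintegral_congr_ae ?_
  filter_upwards [Measure.rnDeriv_lt_top P Q] with x hx
  rw [Real.sqrt_eq_rpow, ← ENNReal.ofReal_rpow_of_nonneg ENNReal.toReal_nonneg (by norm_num),
    ENNReal.ofReal_toReal hx.ne, one_div]

theorem integrable_exp_neg_half_llr (hPQ : P ≪ Q) :
    Integrable (fun x => Real.exp (-llr P Q x / 2)) P := by
  rw [← integrable_rnDeriv_smul_iff hPQ, rnDeriv_smul_exp_neg_half_llr]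
  exact integrable_sqrt_toReal_rnDeriv

theorem integral_exp_neg_half_llr (hPQ : P ≪ Q) :
    ∫ x, Real.exp (-llr P Q x / 2) ∂P = ∫ x, √(P.rnDeriv Q x).toReal ∂Q := by
  rw [← integral_rnDeriv_smul hPQ, rnDeriv_smul_exp_neg_half_llr]

theorem ofReal_exp_neg_half_integral_llr_le [IsProbabilityMeasure P] (hPQ : P ≪ Q)
    (h_int : Integrable (llr P Q) P) :
    ENNReal.ofReal (Real.exp (-(∫ x, llr P Q x ∂P) / 2)) ≤ bhattacharyya P Q := by
  rw [← ofReal_integral_sqrt_toReal_rnDeriv, ← integral_exp_neg_half_llr hPQ, ← integral_neg,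
    ← integral_div]
  exact ENNReal.ofReal_le_ofReal <| convexOn_exp.map_integral_le Real.continuous_exp.continuousOn
    isClosed_univ (Filter.Eventually.of_forall fun _ => Set.mem_univ _) (h_int.neg.div_const 2)
    (integrable_exp_neg_half_llr hPQ)

end MeasureTheory

theorem ofReal_exp_neg_integral_llr_le {Ω : Type*} [MeasurableSpace Ω] {P Q : Measure Ω}
    [IsProbabilityMeasure P] [IsProbabilityMeasure Q] (hPQ : P ≪ Q)
    (h_int : Integrable (llr P Q) P) {E : Set Ω} (hE : MeasurableSet E) :
    ENNReal.ofReal (Real.exp (-∫ x, llr P Q x ∂P)) ≤ 2 * (P E + Q Eᶜ) :=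
  calc ENNReal.ofReal (Real.exp (-∫ x, llr P Q x ∂P))
      = ENNReal.ofReal (Real.exp (-(∫ x, llr P Q x ∂P) / 2)) ^ 2 := by
        rw [← ENNReal.ofReal_pow (Real.exp_nonneg _), ← Real.exp_nat_mul]
        ring_nf
    _ ≤ bhattacharyya P Q ^ 2 := by gcongr; exact ofReal_exp_neg_half_integral_llr_le hPQ h_int
    _ ≤ 2 * (P E + Q Eᶜ) := bhattacharyya_sq_le hE

/-- Bretagnolle–Huber inequality: for probability measures `P, Q` and any event `E`,
`P(E) + Q(Eᶜ) ≥ (1/2) exp(−KL(P‖Q))` (the right-hand side being `0` when `KL = ∞`). -/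
theorem stmt6 {Ω : Type*} [MeasurableSpace Ω] (P Q : Measure Ω)
    [IsProbabilityMeasure P] [IsProbabilityMeasure Q]
    (E : Set Ω) (hE : MeasurableSet E) :
    2⁻¹ * (if klDiv P Q = ⊤ then 0
      else ENNReal.ofReal (Real.exp (-(klDiv P Q).toReal))) ≤ P E + Q Eᶜ := by
  by_cases hKL : klDiv P Q = ⊤
  · simp [hKL]
  rw [if_neg hKL]
  obtain ⟨hPQ, h_int⟩ : P ≪ Q ∧ Integrable (llr P Q) P := by
    by_contra h
    exact hKL (if_neg h)
  have hKL_eq : klDiv P Q = ENNReal.ofReal (∫ x, llr P Q x ∂P) := if_pos ⟨hPQ, h_int⟩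
  calc 2⁻¹ * ENNReal.ofReal (Real.exp (-(klDiv P Q).toReal))
      ≤ 2⁻¹ * ENNReal.ofReal (Real.exp (-∫ x, llr P Q x ∂P)) := by
        gcongr
        rw [hKL_eq, ENNReal.toReal_ofReal']
        exact le_max_left _ _
    _ ≤ 2⁻¹ * (2 * (P E + Q Eᶜ)) := by gcongr; exact ofReal_exp_neg_integral_llr_le hPQ h_int hE
    _ = P E + Q Eᶜ := ENNReal.inv_mul_cancel_left two_ne_zero ENNReal.ofNat_ne_top
end

section
/- (Remaining-signal lower bound in block-OMP) Let S ⊊ S* with |S*| = k, set S_R = S*\S, v the stacking of the true rows on S_R, and u_sig = (I − P_S) Ψ_{S_R} v. If λ_min(Ψ_{S*}^T Ψ_{S*}) ≥ αT, then ‖Ψ_{S_R}^T u_sig‖₂ ≥ αT·‖v‖₂, and consequently there exists j ∈ S_R with ‖Ψ_j^T u_sig‖₂ ≥ (αT/√k)·‖v‖₂. -/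
/-!
With `w = (Ψ_Sᵀ Ψ_S)⁻¹ Ψ_Sᵀ Ψ_{S_R} v`, the residual `u_sig = Ψ_{S_R} v - Ψ_S w` is orthogonal
to the columns of `Ψ_S`, so `⟨v, Ψ_{S_R}ᵀ u_sig⟩ = ‖u_sig‖²`. But `u_sig = Ψ_{S*} x` for the
vector `x` equal to `v` on `S_R` and to `-w` on `S`, so the Gram bound gives
`‖u_sig‖² ≥ αT ‖x‖² ≥ αT ‖v‖²`, and Cauchy–Schwarz yields the first inequality. The second is
pigeonhole: `‖Ψ_{S_R}ᵀ u_sig‖²` is the sum of the `|S_R| ≤ k` block terms `‖Ψ_jᵀ u_sig‖²`.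
-/

open Matrix

/-- Euclidean norm of a finitely-indexed real vector. -/
noncomputable def norm2 {n : Type*} [Fintype n] (v : n → ℝ) : ℝ :=
  Real.sqrt (∑ i, v i ^ 2)

/-- Horizontal concatenation of the design blocks `Ψ_j` over the index set `A`. -/
def blockCat {M T d : ℕ} (Ψ : Fin M → Matrix (Fin T) (Fin d) ℝ)
    (A : Finset (Fin M)) : Matrix (Fin T) (A × Fin d) ℝ :=
  fun t p => Ψ p.1.val t p.2

open Finset Function

section LinearAlgebra

variable {m n a b : Type*}

lemma norm2_nonneg [Fintype n] (v : n → ℝ) : 0 ≤ norm2 v :=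
  Real.sqrt_nonneg _

lemma norm2_sq [Fintype n] (v : n → ℝ) : norm2 v ^ 2 = ∑ i, v i ^ 2 :=
  Real.sq_sqrt (sum_nonneg fun _ _ => sq_nonneg _)

lemma dotProduct_le_norm2_mul_norm2 [Fintype n] (v w : n → ℝ) : v ⬝ᵥ w ≤ norm2 v * norm2 w :=
  Real.sum_mul_le_sqrt_mul_sqrt univ v w

lemma mul_norm2_le_norm2_of_mul_sq_le_dotProduct [Fintype n] {c : ℝ} {v w : n → ℝ}
    (h : c * norm2 v ^ 2 ≤ v ⬝ᵥ w) : c * norm2 v ≤ norm2 w := by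
  rcases (norm2_nonneg v).eq_or_lt with hv | hv
  · rw [← hv, mul_zero]
    exact norm2_nonneg w
  · refine le_of_mul_le_mul_right ?_ hv
    nlinarith [dotProduct_le_norm2_mul_norm2 v w]

lemma mulVec_extend_zero [Fintype n] [Fintype a] (C : Matrix m n ℝ) {e : a → n}
    (he : Injective e) (x : a → ℝ) :
    C *ᵥ extend e x 0 = C.submatrix id e *ᵥ x := by
  ext i
  refine (Fintype.sum_of_injective e he _ _ (fun p hp => ?_) fun q => ?_).symm
  · rw [extend_apply' _ _ _ (by simpa using hp), Pi.zero_apply, mul_zero]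
  · rw [he.extend_apply]
    rfl

lemma sum_sq_extend_zero [Fintype n] [Fintype a] {e : a → n} (he : Injective e) (x : a → ℝ) :
    ∑ p, extend e x 0 p ^ 2 = ∑ q, x q ^ 2 :=
  (Fintype.sum_of_injective e he _ _
    (fun p hp => by rw [extend_apply' _ _ _ (by simpa using hp)]; simp)
    fun q => by rw [he.extend_apply]).symm

lemma sum_sq_le_sum_sq_extend_sub_extend [Fintype n] [Fintype a] {e : a → n} {f : b → n}
    (he : Injective e) (hdisj : Disjoint (Set.range e) (Set.range f)) (x : a → ℝ) (y : b → ℝ) :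
    ∑ q, x q ^ 2 ≤ ∑ p, (extend e x 0 p - extend f y 0 p) ^ 2 := by
  rw [← sum_sq_extend_zero he x]
  refine sum_le_sum fun p _ => ?_
  by_cases hp : p ∈ Set.range f
  · rw [extend_apply' (f := e) x 0 p (by simpa using hdisj.notMem_of_mem_right hp)]
    simp only [Pi.zero_apply, ne_eq, OfNat.ofNat_ne_zero, not_false_eq_true, zero_pow]
    positivity
  · rw [extend_apply' (f := f) y 0 p (by simpa using hp), Pi.zero_apply, sub_zero]

lemma transpose_mul_one_sub_proj [Fintype m] [DecidableEq m] [Fintype a] [DecidableEq a]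
    {A : Matrix m a ℝ} (hA : IsUnit (Aᵀ * A).det) :
    Aᵀ * (1 - A * (Aᵀ * A)⁻¹ * Aᵀ) = 0 := by
  rw [Matrix.mul_sub, Matrix.mul_one, ← Matrix.mul_assoc, ← Matrix.mul_assoc,
    Matrix.mul_nonsing_inv _ hA, Matrix.one_mul, sub_self]

lemma one_sub_proj_mulVec [Fintype m] [DecidableEq m] [Fintype a] (A : Matrix m a ℝ)
    (G : Matrix a a ℝ) (y : m → ℝ) :
    (1 - A * G * Aᵀ) *ᵥ y = y - A *ᵥ ((G * Aᵀ) *ᵥ y) := by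
  rw [sub_mulVec, one_mulVec, mulVec_mulVec, Matrix.mul_assoc]

lemma dotProduct_transpose_mul_mulVec [Fintype m] [Fintype a] (C : Matrix m a ℝ) (x : a → ℝ) :
    x ⬝ᵥ (Cᵀ * C) *ᵥ x = (C *ᵥ x) ⬝ᵥ (C *ᵥ x) := by
  rw [← mulVec_mulVec, dotProduct_mulVec, vecMul_transpose]

lemma dotProduct_transpose_mulVec_of_residual [Fintype m] [Fintype a] [Fintype b]
    {A : Matrix m a ℝ} {B : Matrix m b ℝ}
    {v : b → ℝ} {w : a → ℝ} {u : m → ℝ} (hu : u = B *ᵥ v - A *ᵥ w) (hAu : Aᵀ *ᵥ u = 0) :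
    v ⬝ᵥ (Bᵀ *ᵥ u) = u ⬝ᵥ u := by
  have hAw : (A *ᵥ w) ⬝ᵥ u = 0 := by
    rw [dotProduct_comm, dotProduct_mulVec, ← mulVec_transpose, hAu, zero_dotProduct]
  rw [dotProduct_mulVec, vecMul_transpose, eq_add_of_sub_eq hu.symm, add_dotProduct, hAw,
    add_zero]

end LinearAlgebra

lemma exists_div_sqrt_le_of_le_sqrt_sum_sq {ι : Type*} {R : Finset ι} (hR : R.Nonempty)
    {k : ℕ} (hk : #R ≤ k) {g : ι → ℝ} (hg : ∀ j ∈ R, 0 ≤ g j) {c : ℝ}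
    (hc : c ≤ √(∑ j ∈ R, g j ^ 2)) : ∃ j ∈ R, c / √k ≤ g j := by
  obtain ⟨j, hj, hmax⟩ := exists_max_image R g hR
  refine ⟨j, hj, ?_⟩
  have hk0 : 0 < √(k : ℝ) := Real.sqrt_pos.mpr (by exact_mod_cast hR.card_pos.trans_le hk)
  have hsum : ∑ i ∈ R, g i ^ 2 ≤ k * g j ^ 2 :=
    calc ∑ i ∈ R, g i ^ 2 ≤ #R • g j ^ 2 :=
          sum_le_card_nsmul _ _ _ fun i hi => pow_le_pow_left₀ (hg i hi) (hmax i hi) 2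
      _ ≤ k * g j ^ 2 := by
          rw [nsmul_eq_mul]
          exact mul_le_mul_of_nonneg_right (by exact_mod_cast hk) (sq_nonneg _)
  rw [div_le_iff₀ hk0]
  calc c ≤ √(k * g j ^ 2) := hc.trans (Real.sqrt_le_sqrt hsum)
    _ = g j * √k := by rw [Real.sqrt_mul' _ (sq_nonneg _), Real.sqrt_sq (hg j hj), mul_comm]

section Blocks

variable {M T d : ℕ} (Ψ : Fin M → Matrix (Fin T) (Fin d) ℝ)

def blockInclusion {s t : Finset (Fin M)} (h : s ⊆ t) (p : s × Fin d) : t × Fin d :=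
  (⟨p.1, h p.1.2⟩, p.2)

lemma blockInclusion_injective {s t : Finset (Fin M)} (h : s ⊆ t) :
    Injective (blockInclusion (d := d) h) := by
  rintro ⟨⟨j, _⟩, i⟩ ⟨⟨j', _⟩, i'⟩ hji
  simp_all [blockInclusion]

lemma blockCat_eq_submatrix {s t : Finset (Fin M)} (h : s ⊆ t) :
    blockCat Ψ s = (blockCat Ψ t).submatrix id (blockInclusion h) :=
  rfl

lemma disjoint_range_blockInclusion {s s' t : Finset (Fin M)} (hs : s ⊆ t) (hs' : s' ⊆ t)
    (hdisj : Disjoint s s') :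
    Disjoint (Set.range (blockInclusion (d := d) hs)) (Set.range (blockInclusion hs')) := by
  rw [Set.disjoint_left]
  rintro _ ⟨p, rfl⟩ ⟨q, hq⟩
  have : q.1.1 = p.1.1 := congrArg (fun r => r.1.1) hq
  exact disjoint_left.mp hdisj p.1.2 (this ▸ q.1.2)

lemma norm2_blockCat_transpose_mulVec_sq (R : Finset (Fin M)) (u : Fin T → ℝ) :
    norm2 ((blockCat Ψ R)ᵀ *ᵥ u) ^ 2 = ∑ j ∈ R, norm2 ((Ψ j)ᵀ *ᵥ u) ^ 2 := by
  simp only [norm2_sq]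
  rw [Fintype.sum_prod_type, ← sum_coe_sort R]
  rfl

end Blocks

theorem stmt17_general {M T d k : ℕ}
    (Ψ : Fin M → Matrix (Fin T) (Fin d) ℝ)
    (Sstar S : Finset (Fin M)) (hSS : S ⊂ Sstar) (hk : Sstar.card = k)
    (α : ℝ) (hαT : 0 < α * T)
    (hinv : IsUnit ((blockCat Ψ S)ᵀ * blockCat Ψ S).det)
    (hGram : ∀ x : ↥Sstar × Fin d → ℝ,
      α * T * (∑ p, x p ^ 2) ≤ x ⬝ᵥ ((blockCat Ψ Sstar)ᵀ * blockCat Ψ Sstar).mulVec x)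
    (v : ↥(Sstar \ S) × Fin d → ℝ)
    (usig : Fin T → ℝ)
    (husig : usig = (1 - blockCat Ψ S *
        ((blockCat Ψ S)ᵀ * blockCat Ψ S)⁻¹ * (blockCat Ψ S)ᵀ).mulVec
        ((blockCat Ψ (Sstar \ S)).mulVec v)) :
    α * T * norm2 v ≤ norm2 ((blockCat Ψ (Sstar \ S))ᵀ.mulVec usig) ∧
    ∃ j ∈ Sstar \ S,
      α * T / Real.sqrt k * norm2 v ≤ norm2 ((Ψ j)ᵀ.mulVec usig) := by
  set A := blockCat Ψ S
  set B := blockCat Ψ (Sstar \ S)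
  set w := ((Aᵀ * A)⁻¹ * Aᵀ) *ᵥ (B *ᵥ v)
  have hu : usig = B *ᵥ v - A *ᵥ w := by rw [husig, one_sub_proj_mulVec]
  have hAu : Aᵀ *ᵥ usig = 0 := by
    rw [husig, mulVec_mulVec, transpose_mul_one_sub_proj hinv, zero_mulVec]
  have hR : Sstar \ S ⊆ Sstar := sdiff_subset
  set x := extend (blockInclusion hR) v 0 - extend (blockInclusion hSS.subset) w 0
  have hx : blockCat Ψ Sstar *ᵥ x = usig := by
    rw [mulVec_sub, mulVec_extend_zero _ (blockInclusion_injective hR),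
      mulVec_extend_zero _ (blockInclusion_injective hSS.subset), ← blockCat_eq_submatrix,
      ← blockCat_eq_submatrix, hu]
  have hvx : ∑ p, v p ^ 2 ≤ ∑ p, x p ^ 2 :=
    sum_sq_le_sum_sq_extend_sub_extend (blockInclusion_injective hR)
      (disjoint_range_blockInclusion hR hSS.subset sdiff_disjoint) v w
  have hsignal : α * T * norm2 v ^ 2 ≤ v ⬝ᵥ (Bᵀ *ᵥ usig) := by
    rw [dotProduct_transpose_mulVec_of_residual hu hAu, norm2_sq, ← hx,
      ← dotProduct_transpose_mul_mulVec]
    exact (mul_le_mul_of_nonneg_left hvx hαT.le).trans (hGram x)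
  have hfirst := mul_norm2_le_norm2_of_mul_sq_le_dotProduct hsignal
  refine ⟨hfirst, ?_⟩
  have hcard : #(Sstar \ S) ≤ k := hk ▸ card_le_card hR
  simp only [div_mul_eq_mul_div]
  refine exists_div_sqrt_le_of_le_sqrt_sum_sq (sdiff_nonempty.mpr hSS.not_subset) hcard
    (fun j _ => norm2_nonneg _) ?_
  rwa [← norm2_blockCat_transpose_mulVec_sq, Real.sqrt_sq (norm2_nonneg _)]

/-- Remaining-signal lower bound in block-OMP: with `S ⊊ S*`, `S_R = S* \ S`, `v` the
stacked true rows on `S_R` and `u_sig = (I − P_S)Ψ_{S_R} v`, the Gram lower bound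
`λ_min(Ψ_{S*}ᵀΨ_{S*}) ≥ αT` gives `‖Ψ_{S_R}ᵀ u_sig‖ ≥ αT‖v‖`, and hence some block
`j ∈ S_R` has `‖Ψ_jᵀ u_sig‖ ≥ (αT/√k)‖v‖`. -/
theorem stmt17 {M T d k : ℕ}
    (Ψ : Fin M → Matrix (Fin T) (Fin d) ℝ)
    (Wstar : Fin M → Fin d → ℝ)
    (Sstar S : Finset (Fin M)) (hSS : S ⊂ Sstar) (hk : Sstar.card = k)
    (α : ℝ) (hαT : 0 < α * T)
    (hinv : IsUnit ((blockCat Ψ S)ᵀ * blockCat Ψ S).det)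
    (hGram : ∀ x : ↥Sstar × Fin d → ℝ,
      α * T * (∑ p, x p ^ 2) ≤ x ⬝ᵥ ((blockCat Ψ Sstar)ᵀ * blockCat Ψ Sstar).mulVec x)
    (v : ↥(Sstar \ S) × Fin d → ℝ) (hv : v = fun p => Wstar p.1.val p.2)
    (usig : Fin T → ℝ)
    (husig : usig = (1 - blockCat Ψ S *
        ((blockCat Ψ S)ᵀ * blockCat Ψ S)⁻¹ * (blockCat Ψ S)ᵀ).mulVec
        ((blockCat Ψ (Sstar \ S)).mulVec v)) :
    α * T * norm2 v ≤ norm2 ((blockCat Ψ (Sstar \ S))ᵀ.mulVec usig) ∧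
    ∃ j ∈ Sstar \ S,
      α * T / Real.sqrt k * norm2 v ≤ norm2 ((Ψ j)ᵀ.mulVec usig) :=
  stmt17_general Ψ Sstar S hSS hk α hαT hinv hGram v usig husig
end
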